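/- For n ≥ 3, let α be the automorphism of GL(n,F₂) given by α(g) = (g⁻¹)ᵗ. There is no bijection σ : F₂ⁿ → F₂ⁿ satisfying σ(g·x) = α(g)·σ(x) for all g ∈ GL(n,F₂) and x ∈ F₂ⁿ. -/

import Mathlib

/-!
Transvections `1 + E_{ij}` with `j ≠ k` fix `e_k` and `0`, and `g ↦ (g⁻¹)ᵀ` sends them to the
transvections `1 - E_{ji}`. An intertwiner `σ` would therefore map both `e_k` and `0` to vectors
fixed by every `1 - E_{ji}` with `j ≠ k`, i.e. to vectors whose `i`-th coordinate vanishes for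
each `i`: once there are at least three indices, some `j` avoids both `i` and `k`. So `σ` would
send `e_k` and `0` to the same vector `0`.
-/

namespace Matrix

variable {ι R : Type*} [Fintype ι] [DecidableEq ι] [CommRing R]

theorem transvection_mulVec (i j : ι) (c : R) (v : ι → R) :
    transvection i j c *ᵥ v = v + Pi.single i (c * v j) := by
  rw [transvection, add_mulVec, one_mulVec, single_mulVec_eq, ← Pi.single_smul, smul_eq_mul,
    mul_one]

theorem transvection_mulVec_eq_self_iff (i j : ι) (c : R) (v : ι → R) :
    transvection i j c *ᵥ v = v ↔ c * v j = 0 := by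
  rw [transvection_mulVec, add_eq_left, Pi.single_eq_zero_iff]

namespace SpecialLinearGroup

theorem coe_toGL_transvection {i j : ι} (hij : i ≠ j) (c : R) :
    (toGL (transvection hij c) : Matrix ι ι R) = Matrix.transvection i j c :=
  rfl

theorem transpose_coe_toGL_transvection_inv {i j : ι} (hij : i ≠ j) (c : R) :
    (((toGL (transvection hij c))⁻¹ : GL ι R) : Matrix ι ι R)ᵀ =
      Matrix.transvection j i (-c) := by
  rw [← map_inv, transvection_inv, coe_toGL_transvection, Matrix.transvection, transpose_add,
    transpose_one, transpose_single, Matrix.transvection]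

end SpecialLinearGroup

theorem apply_eq_zero_of_intertwines_transpose_inv {σ : (ι → R) → (ι → R)}
    (hσ : ∀ (g : GL ι R) (x : ι → R), σ (g *ᵥ x) = (↑g⁻¹ : Matrix ι ι R)ᵀ *ᵥ σ x)
    (h3 : 3 ≤ Fintype.card ι) {k : ι} {x : ι → R} (hx : ∀ j, j ≠ k → x j = 0) :
    σ x = 0 := by
  funext i
  obtain ⟨j, hji, hjk⟩ : ∃ j, j ≠ i ∧ j ≠ k :=
    ENat.exists_ne_ne_of_three_le (by rw [ENat.card_eq_coe_fintype_card]; exact_mod_cast h3) i k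
  have hfix : Matrix.transvection i j (1 : R) *ᵥ x = x :=
    (transvection_mulVec_eq_self_iff i j 1 x).2 (by rw [hx j hjk, mul_zero])
  have hσfix := hσ (SpecialLinearGroup.toGL (SpecialLinearGroup.transvection hji.symm 1)) x
  rw [SpecialLinearGroup.coe_toGL_transvection, hfix,
    SpecialLinearGroup.transpose_coe_toGL_transvection_inv, eq_comm,
    transvection_mulVec_eq_self_iff, neg_one_mul, neg_eq_zero] at hσfix
  exact hσfix

theorem not_exists_intertwiner_transpose_inv [Nontrivial R] (h3 : 3 ≤ Fintype.card ι) :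
    ¬ ∃ σ : (ι → R) ≃ (ι → R),
      ∀ (g : GL ι R) (x : ι → R), σ (g *ᵥ x) = (↑g⁻¹ : Matrix ι ι R)ᵀ *ᵥ σ x := by
  rintro ⟨σ, hσ⟩
  obtain ⟨k⟩ : Nonempty ι := Fintype.card_pos_iff.1 (by omega)
  have hσe : σ (Pi.single k 1) = 0 :=
    apply_eq_zero_of_intertwines_transpose_inv hσ h3 fun _ hj ↦ Pi.single_eq_of_ne hj 1
  have hσ0 : σ 0 = 0 :=
    apply_eq_zero_of_intertwines_transpose_inv hσ h3 (k := k) fun _ _ ↦ rfl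
  exact Pi.single_ne_zero_iff.2 one_ne_zero (σ.injective (hσe.trans hσ0.symm))

end Matrix

/-- For `n ≥ 3`, there is no bijection `σ` of `F₂ⁿ` intertwining the natural
action of `GL(n,F₂)` with the action twisted by the automorphism
`g ↦ (g⁻¹)ᵗ`. -/
theorem no_twisted_intertwiner {n : ℕ} (hn : 3 ≤ n) :
    ¬ ∃ σ : (Fin n → ZMod 2) ≃ (Fin n → ZMod 2),
      ∀ (g : GL (Fin n) (ZMod 2)) (x : Fin n → ZMod 2),
        σ ((g : Matrix (Fin n) (Fin n) (ZMod 2)).mulVec x) =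
          (Matrix.transpose ((g⁻¹ : GL (Fin n) (ZMod 2)) :
            Matrix (Fin n) (Fin n) (ZMod 2))).mulVec (σ x) :=
  Matrix.not_exists_intertwiner_transpose_inv (by rwa [Fintype.card_fin])
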